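/- For each positive integer n, specializing z = 1 in Han's formula: the sum over all binary trees T with n vertices of the product over vertices v of (1+h_v)^(h_v-1)/(h_v*(h_v+1)^(h_v-2)) equals 2^n (n+1)^(n-1)/n!, and each factor (1+h_v)^(h_v-1)/(h_v*(h_v+1)^(h_v-2)) simplifies to 1 + 1/h_v. -/

import Mathlib

/-!
Deleting the root of a binary tree with `n + 1` vertices leaves an ordered pair of subtrees with
`i + j = n` vertices, and the root's hook is `n + 1`; so the sums `g n = ∑_T ∏_v (1 + 1/h_v)`
satisfy `g (n + 1) = (1 + 1/(n+1)) ∑_{i+j=n} g i g j` with `g 0 = 1`. The closed form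
`2^n (n+1)^(n-1) / n!` satisfies the same recursion because of Abel's identity
`∑_k C(n,k) (k+1)^(k-1) (y+n-k)^(n-k) = (y+n+1)^n`: both sides have derivative
`n (y+n+1)^(n-1)` by induction, and at `y = -(n+1)` the left side is an `n`-th finite difference of
a polynomial of degree `n - 1`, hence `0`. The simplification of the factor is direct algebra.
-/

/-- A binary tree: `nil` is the empty tree, `node l r` is a vertex with
(possibly empty) left subtree `l` and right subtree `r`. -/
inductive BinTree where
  | nil : BinTree
  | node : BinTree → BinTree → BinTree

def BinTree.size : BinTree → ℕ
  | .nil => 0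
  | .node l r => l.size + r.size + 1

/-- The multiset of hook lengths of the vertices of a binary tree
(the hook length of a vertex is the number of vertices of the subtree
rooted at it, including itself). -/
def BinTree.hooks : BinTree → Multiset ℕ
  | .nil => 0
  | .node l r => (BinTree.node l r).size ::ₘ (l.hooks + r.hooks)

open Finset

namespace BinTree

theorem eq_nil_of_size_eq_zero : ∀ {T : BinTree}, T.size = 0 → T = nil
  | .nil, _ => rfl

instance : Unique {T : BinTree // T.size = 0} where
  default := ⟨nil, rfl⟩
  uniq T := Subtype.ext (eq_nil_of_size_eq_zero T.2)

def sizeSuccEquiv (n : ℕ) :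
    {T : BinTree // T.size = n + 1} ≃
      Σ p : antidiagonal n,
        {l : BinTree // l.size = p.1.1} × {r : BinTree // r.size = p.1.2} where
  toFun
    | ⟨.node l r, h⟩ =>
      ⟨⟨(l.size, r.size), mem_antidiagonal.mpr (by simpa [size] using h)⟩,
        ⟨l, rfl⟩, ⟨r, rfl⟩⟩
  invFun
    | ⟨p, ⟨l, hl⟩, ⟨r, hr⟩⟩ =>
      ⟨.node l r, by rw [size, hl, hr, mem_antidiagonal.mp p.2]⟩
  left_inv
    | ⟨.node _ _, _⟩ => rfl
  right_inv := by
    rintro ⟨⟨⟨i, j⟩, h⟩, ⟨l, hl⟩, ⟨r, hr⟩⟩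
    dsimp only at hl hr
    subst hl hr
    rfl

instance (n : ℕ) : Finite {T : BinTree // T.size = n} := by
  induction n using Nat.strong_induction_on with
  | _ n ih =>
    rcases n with _ | n
    · infer_instance
    · have (p : antidiagonal n) : Finite {l : BinTree // l.size = p.1.1} :=
        ih _ (by have := mem_antidiagonal.mp p.2; omega)
      have (p : antidiagonal n) : Finite {r : BinTree // r.size = p.1.2} :=
        ih _ (by have := mem_antidiagonal.mp p.2; omega)
      exact .of_equiv _ (sizeSuccEquiv n).symm

variable {R : Type*} [CommSemiring R]

def hookProd (f : ℕ → R) (T : BinTree) : R := (T.hooks.map f).prod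

@[simp] theorem hookProd_nil (f : ℕ → R) : hookProd f nil = 1 := by simp [hookProd, hooks]

theorem hookProd_node (f : ℕ → R) (l r : BinTree) :
    hookProd f (node l r) = f (l.size + r.size + 1) * (hookProd f l * hookProd f r) := by
  simp [hookProd, hooks, size]

variable [TopologicalSpace R]

noncomputable def hookSum (f : ℕ → R) (n : ℕ) : R :=
  ∑' T : {T : BinTree // T.size = n}, hookProd f T

theorem hookSum_zero (f : ℕ → R) : hookSum f 0 = 1 := by
  rw [hookSum, tsum_fintype, Fintype.sum_unique]
  exact hookProd_nil f

theorem hookSum_succ (f : ℕ → R) (n : ℕ) :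
    hookSum f (n + 1) = f (n + 1) * ∑ p ∈ antidiagonal n, hookSum f p.1 * hookSum f p.2 := by
  have (m : ℕ) : Fintype {T : BinTree // T.size = m} := .ofFinite _
  simp only [hookSum, tsum_fintype]
  rw [← (sizeSuccEquiv n).symm.sum_comp, Fintype.sum_sigma, ← sum_coe_sort (antidiagonal n),
    mul_sum]
  refine sum_congr rfl fun p _ => ?_
  rw [Fintype.sum_prod_type, sum_mul_sum, mul_sum]
  refine sum_congr rfl fun l _ => ?_
  rw [mul_sum]
  refine sum_congr rfl fun r _ => ?_
  rw [show ((sizeSuccEquiv n).symm ⟨p, l, r⟩ : BinTree) = node l r from rfl, hookProd_node,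
    l.2, r.2, mem_antidiagonal.mp p.2]

theorem pos_of_mem_hooks {h : ℕ} : ∀ {T : BinTree}, h ∈ T.hooks → 0 < h
  | .node l r, hmem => by
    rw [hooks, Multiset.mem_cons, Multiset.mem_add] at hmem
    rcases hmem with rfl | hl | hr
    · exact Nat.succ_pos _
    · exact pos_of_mem_hooks hl
    · exact pos_of_mem_hooks hr

end BinTree

theorem sum_neg_one_pow_mul_choose_mul_pow_eq_zero {R : Type*} [CommRing R] {j m : ℕ}
    (h : j < m) (a : R) :
    ∑ k ∈ range (m + 1), (-1) ^ (m - k) * (m.choose k : R) * (a + k) ^ j = 0 := by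
  have := congr_fun (fwdDiff_iter_pow_eq_zero_of_lt (R := R) h) a
  rw [fwdDiff_iter_eq_sum_shift] at this
  simpa [zsmul_eq_mul] using this

-- At `k = 0` the exponent `k - 1` truncates to `0`, which is harmless because the base is `1`.
noncomputable def abelSum (n : ℕ) (y : ℝ) : ℝ :=
  ∑ k ∈ range (n + 1), n.choose k * ((k : ℝ) + 1) ^ (k - 1) * (y + (n - k : ℕ)) ^ (n - k)

theorem hasDerivAt_abelSum (n : ℕ) (y : ℝ) :
    HasDerivAt (abelSum (n + 1)) ((n + 1) * abelSum n (y + 1)) y := by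
  have hterm := HasDerivAt.fun_sum (u := range (n + 2)) fun k _ =>
    (((hasDerivAt_id y).add_const ((n + 1 - k : ℕ) : ℝ)).pow (n + 1 - k)).const_mul
      (((n + 1).choose k : ℝ) * ((k : ℝ) + 1) ^ (k - 1))
  refine HasDerivAt.congr_deriv (f := abelSum (n + 1)) hterm ?_
  simp only [sum_range_succ _ (n + 1), Nat.sub_self, Nat.cast_zero, zero_mul, mul_zero, add_zero,
    abelSum, mul_sum, id]
  refine sum_congr rfl fun k hk => ?_
  have hk : k ≤ n := Nat.lt_succ_iff.mp (mem_range.mp hk)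
  have hchoose : ((n + 1).choose k : ℝ) * ((n + 1 - k : ℕ) : ℝ) = (n + 1) * n.choose k := by
    exact_mod_cast (Nat.choose_mul_succ_eq n k).symm.trans (mul_comm _ _)
  have hshift : y + ((n + 1 - k : ℕ) : ℝ) = y + 1 + ((n - k : ℕ) : ℝ) := by
    push_cast [Nat.sub_add_comm hk, Nat.cast_sub hk]; ring
  rw [show n + 1 - k - 1 = n - k by omega, hshift]
  linear_combination ((k : ℝ) + 1) ^ (k - 1) * (y + 1 + ((n - k : ℕ) : ℝ)) ^ (n - k) * hchoose

theorem abelSum_succ_neg (n : ℕ) : abelSum (n + 1) (-(n + 2)) = 0 := by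
  rw [← sum_neg_one_pow_mul_choose_mul_pow_eq_zero (Nat.lt_succ_self n) (1 : ℝ), abelSum]
  refine sum_congr rfl fun k hk => ?_
  have hk : k ≤ n + 1 := Nat.lt_succ_iff.mp (mem_range.mp hk)
  have hbase : -((n : ℝ) + 2) + ((n + 1 - k : ℕ) : ℝ) = -(1 + k) := by
    push_cast [Nat.cast_sub hk]; ring
  have hpow : ((k : ℝ) + 1) ^ (k - 1) * (1 + k) ^ (n + 1 - k) = (1 + k) ^ n := by
    rcases k with _ | k
    · simp
    · rw [add_comm (1 : ℝ), ← pow_add]; congr 1; omega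
  rw [hbase, neg_pow, ← hpow]
  ring

theorem abelSum_eq (n : ℕ) (y : ℝ) : abelSum n y = (y + n + 1) ^ n := by
  induction n generalizing y with
  | zero => simp [abelSum]
  | succ n ih =>
    have hg (y : ℝ) : HasDerivAt (fun y : ℝ => (y + (n + 1 : ℕ) + 1) ^ (n + 1))
        ((n + 1) * abelSum n (y + 1)) y := by
      refine ((hasDerivAt_id y).add_const _).add_const _ |>.pow (n + 1) |>.congr_deriv ?_
      rw [ih, id]; push_cast; ring
    have hdiff (y : ℝ) := (hasDerivAt_abelSum n y).fun_sub (hg y)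
    have hconst := is_const_of_deriv_eq_zero (fun y => (hdiff y).differentiableAt)
      (fun y => by simpa using (hdiff y).deriv) y (-(n + 2))
    have hroot : -((n : ℝ) + 2) + (n + 1 : ℕ) + 1 = 0 := by push_cast; ring
    rw [hroot, abelSum_succ_neg, zero_pow n.succ_ne_zero, sub_zero, sub_eq_zero] at hconst
    exact hconst

theorem succ_pow_pred_mul_succ (k : ℕ) : ((k : ℝ) + 1) ^ (k - 1) * (k + 1) = (k + 1) ^ k := by
  rcases k with _ | k
  · simp
  · rw [Nat.add_sub_cancel, ← pow_succ, Nat.cast_succ]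

-- Writing `n + 2 = (i + 1) + (j + 1)` splits the sum into two Abel sums at `y = 1`, one reflected.
theorem add_two_mul_sum_antidiagonal_choose_mul_pow_pred (n : ℕ) :
    ((n : ℝ) + 2) * ∑ p ∈ antidiagonal n,
        n.choose p.1 * ((p.1 : ℝ) + 1) ^ (p.1 - 1) * ((p.2 : ℝ) + 1) ^ (p.2 - 1) =
      2 * (n + 2) ^ n := by
  set B : ℕ → ℕ → ℝ := fun i j => n.choose i * ((i : ℝ) + 1) ^ (i - 1) * (1 + j) ^ j
  have hsplit : ∀ p ∈ antidiagonal n,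
      ((n : ℝ) + 2) *
          (n.choose p.1 * ((p.1 : ℝ) + 1) ^ (p.1 - 1) * ((p.2 : ℝ) + 1) ^ (p.2 - 1)) =
        B p.2 p.1 + B p.1 p.2 := by
    rintro ⟨i, j⟩ hij
    obtain rfl : i + j = n := mem_antidiagonal.mp hij
    have hchoose : (i + j).choose j = (i + j).choose i := Nat.choose_symm_add.symm
    simp only [B, hchoose]
    push_cast
    linear_combination (i + j).choose i * ((j : ℝ) + 1) ^ (j - 1) * succ_pow_pred_mul_succ i
      + (i + j).choose i * ((i : ℝ) + 1) ^ (i - 1) * succ_pow_pred_mul_succ j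
  have hB : ∑ p ∈ antidiagonal n, B p.1 p.2 = (n + 2) ^ n := by
    rw [Nat.sum_antidiagonal_eq_sum_range_succ B, show (n : ℝ) + 2 = 1 + n + 1 by ring,
      ← abelSum_eq]
    rfl
  have hswap : ∑ p ∈ antidiagonal n, B p.2 p.1 = ∑ p ∈ antidiagonal n, B p.1 p.2 :=
    Nat.sum_antidiagonal_swap (f := fun p => B p.1 p.2)
  rw [mul_sum, sum_congr rfl hsplit, sum_add_distrib, hswap, hB]
  ring

noncomputable def postnikov (n : ℕ) : ℝ := 2 ^ n * ((n : ℝ) + 1) ^ (n - 1) / n.factorial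

theorem postnikov_succ (n : ℕ) :
    postnikov (n + 1) =
      (1 + 1 / ((n + 1 : ℕ) : ℝ)) *
        ∑ p ∈ antidiagonal n, postnikov p.1 * postnikov p.2 := by
  have hterm : ∀ p ∈ antidiagonal n, postnikov p.1 * postnikov p.2 = 2 ^ n / n.factorial *
      (n.choose p.1 * ((p.1 : ℝ) + 1) ^ (p.1 - 1) * ((p.2 : ℝ) + 1) ^ (p.2 - 1)) := by
    rintro ⟨i, j⟩ hij
    obtain rfl : i + j = n := mem_antidiagonal.mp hij
    have hfact : ((i + j).choose i : ℝ) * i.factorial * j.factorial = (i + j).factorial := by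
      rw [Nat.choose_symm_add]; exact_mod_cast Nat.add_choose_mul_factorial_mul_factorial i j
    have hchoose : ((i + j).choose i : ℝ) ≠ 0 :=
      mod_cast (Nat.choose_pos (Nat.le_add_right i j)).ne'
    rw [postnikov, postnikov, ← hfact, pow_add]
    field_simp
  have hsum := add_two_mul_sum_antidiagonal_choose_mul_pow_pred n
  rw [sum_congr rfl hterm, ← mul_sum, postnikov, Nat.factorial_succ]
  rw [eq_div_of_mul_eq (by positivity) ((mul_comm _ _).trans hsum)]
  field_simp
  push_cast
  ring

theorem hookSum_one_add_one_div (n : ℕ) :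
    BinTree.hookSum (fun h : ℕ => 1 + 1 / (h : ℝ)) n = postnikov n := by
  induction n using Nat.strong_induction_on with
  | _ n ih =>
    rcases n with _ | n
    · simp [BinTree.hookSum_zero, postnikov]
    · rw [BinTree.hookSum_succ, postnikov_succ]
      refine congrArg _ (sum_congr rfl fun p hp => ?_)
      have hpn := mem_antidiagonal.mp hp
      rw [ih p.1 (by omega), ih p.2 (by omega)]

theorem one_add_pow_pred_div_eq_one_add_one_div {h : ℕ} (hh : 1 ≤ h) :
    ((1 : ℝ) + h) ^ (h - 1) / (h * ((h : ℝ) + 1) ^ ((h : ℤ) - 2)) = 1 + 1 / h := by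
  have hpos : (0 : ℝ) < h := by exact_mod_cast hh
  have hexp : (h : ℤ) - 2 = ((h - 1 : ℕ) : ℤ) + (-1) := by omega
  rw [hexp, zpow_add₀ (by positivity), zpow_natCast, zpow_neg_one, add_comm (1 : ℝ) h]
  field_simp

theorem han_at_one_general (n : ℕ) :
    (∑' T : {T : BinTree // T.size = n},
      ((T.1.hooks).map (fun (h : ℕ) =>
        ((1 : ℝ) + h) ^ (h - 1) / (h * ((h : ℝ) + 1) ^ ((h : ℤ) - 2)))).prod
      = 2 ^ n * ((n : ℝ) + 1) ^ (n - 1) / (Nat.factorial n : ℝ)) ∧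
    ∀ h : ℕ, 1 ≤ h →
      ((1 : ℝ) + h) ^ (h - 1) / (h * ((h : ℝ) + 1) ^ ((h : ℤ) - 2))
        = 1 + 1 / h := by
  refine ⟨?_, fun h => one_add_pow_pred_div_eq_one_add_one_div⟩
  rw [← postnikov, ← hookSum_one_add_one_div]
  refine tsum_congr fun T => congrArg Multiset.prod (Multiset.map_congr rfl fun h hmem => ?_)
  exact one_add_pow_pred_div_eq_one_add_one_div (BinTree.pos_of_mem_hooks hmem)

/-- Han's Theorem 1 at `z = 1` recovers Postnikov's hook length formula:
the weighted sum equals `2^n (n+1)^(n-1)/n!`, and each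
factor `(1+h)^(h-1)/(h(h+1)^(h-2))` simplifies to `1 + 1/h`. -/
theorem han_at_one (n : ℕ) (hn : 1 ≤ n) :
    (∑' T : {T : BinTree // T.size = n},
      ((T.1.hooks).map (fun (h : ℕ) =>
        ((1 : ℝ) + h) ^ (h - 1) / (h * ((h : ℝ) + 1) ^ ((h : ℤ) - 2)))).prod
      = 2 ^ n * ((n : ℝ) + 1) ^ (n - 1) / (Nat.factorial n : ℝ)) ∧
    ∀ h : ℕ, 1 ≤ h →
      ((1 : ℝ) + h) ^ (h - 1) / (h * ((h : ℝ) + 1) ^ ((h : ℤ) - 2))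
        = 1 + 1 / h :=
  han_at_one_general n
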